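/- Let C be an n×n complex matrix and B an m×n complex matrix with B*B + C*C = I_n, and let A be the (m+n)×(m+n) block matrix [[0, B],[0, C]]. Then: (i) the characteristic polynomial of H_A(θ) = (1/2)(e^{−iθ}A + e^{iθ}A*) is independent of θ ∈ ℝ if and only if Q_C(x,y) depends only on the product xy, i.e. there exists a single-variable polynomial q with Q_C(x,y) = q(xy) for all x, y ∈ ℂ; (ii) the characteristic polynomial of H_C(θ) = (1/2)(e^{−iθ}C + e^{iθ}C*) is independent of θ ∈ ℝ if and only if P_C(x,y) depends only on the product xy. -/

import Mathlib

open Matrix Complex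

/-- `P_C(x, y) = det(I - x C - y Cᴴ)`. -/
noncomputable def Pfun {n : ℕ} (C : Matrix (Fin n) (Fin n) ℂ) (x y : ℂ) : ℂ :=
  Matrix.det ((1 : Matrix (Fin n) (Fin n) ℂ) - x • C - y • Cᴴ)

/-- `Q_C(x, y) = det(I - x C - y Cᴴ - x y (I - Cᴴ C))`. -/
noncomputable def Qfun {n : ℕ} (C : Matrix (Fin n) (Fin n) ℂ) (x y : ℂ) : ℂ :=
  Matrix.det ((1 : Matrix (Fin n) (Fin n) ℂ) - x • C - y • Cᴴ
    - (x * y) • ((1 : Matrix (Fin n) (Fin n) ℂ) - Cᴴ * C))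

/-- `H_M(θ) = (1/2)(e^{-iθ} M + e^{iθ} Mᴴ)`. -/
noncomputable def Hmat {ι : Type*} [Fintype ι] [DecidableEq ι]
    (M : Matrix ι ι ℂ) (θ : ℝ) : Matrix ι ι ℂ :=
  (1 / 2 : ℂ) • (Complex.exp (-(θ : ℂ) * Complex.I) • M
    + Complex.exp ((θ : ℂ) * Complex.I) • Mᴴ)


lemma charpoly_eval' {k : Type*} [Fintype k] [DecidableEq k] (M : Matrix k k ℂ) (t : ℂ) :
    M.charpoly.eval t = Matrix.det (t • (1 : Matrix k k ℂ) - M) := by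
  rw [Matrix.charpoly, ← Polynomial.coe_evalRingHom, RingHom.map_det]
  congr 1
  ext i j
  by_cases h : i = j <;>
    simp [h, Matrix.charmatrix_apply_eq, Matrix.charmatrix_apply_ne, Matrix.one_apply,
      Matrix.sub_apply, Matrix.smul_apply]

lemma circle_infinite : Set.Infinite {w : ℂ | ‖w‖ = 1} := by
  have : Set.InjOn (fun θ : ℝ => Complex.exp (θ * Complex.I)) (Set.Ioo 0 1) := by
    intro a ha b hb hab
    rw [Complex.exp_eq_exp_iff_exists_int] at hab
    obtain ⟨k, hk⟩ := hab
    have : (a : ℂ) = b + k * (2 * Real.pi) := by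
      calc (a:ℂ) = ((a:ℂ) * Complex.I) / Complex.I := by field_simp
        _ = ((b:ℂ) * Complex.I + k * (2*Real.pi*Complex.I)) / Complex.I := by rw [hk]
        _ = b + k * (2*Real.pi) := by
            field_simp

    have hre : a = b + k * (2 * Real.pi) := by exact_mod_cast this
    obtain ⟨ha1, ha2⟩ := ha; obtain ⟨hb1, hb2⟩ := hb
    have hk0 : k = 0 := by
      rcases lt_trichotomy k 0 with h|h|h
      · have hk1 : k ≤ -1 := by omega
        have : (k:ℝ) ≤ -1 := by
          have := (@Int.cast_le ℝ _ _ _).mpr hk1; push_cast at this; linarith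
        nlinarith [Real.pi_gt_three]
      · exact h
      · have : (1:ℝ) ≤ k := by exact_mod_cast h
        nlinarith [Real.pi_gt_three]
    rw [hk0] at hre; simpa using hre
  have h2 := Set.Ioo_infinite (a := (0:ℝ)) (b := 1) (by norm_num)
  have h3 := h2.image this
  apply Set.Infinite.mono _ h3
  rintro w ⟨θ, _, rfl⟩
  simp [Complex.norm_exp_ofReal_mul_I]


open MvPolynomial in
lemma core (p : MvPolynomial (Fin 2) ℂ)
    (h : ∀ (z : ℂ) (θ : ℝ),
      eval ![z * Complex.exp (-(θ:ℂ) * Complex.I), z * Complex.exp ((θ:ℂ) * Complex.I)] p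
        = eval ![z, z] p) :
    ∃ q : Polynomial ℂ, ∀ x y : ℂ, eval ![x, y] p = Polynomial.eval (x * y) q := by
  classical
  set N := p.totalDegree with hN
  have hd0 : ∀ d ∈ p.support, d 0 ≤ N := by
    intro d hd
    have h1 := MvPolynomial.le_totalDegree hd
    have h2 : (d.sum fun _ e => e) = d 0 + d 1 := by
      rw [Finsupp.sum_fintype _ _ (fun _ => rfl), Fin.sum_univ_two]
    omega
  -- the family of one-variable polynomials
  set F : ℂ → Polynomial ℂ := fun z =>
    ∑ d ∈ p.support, Polynomial.C (p.coeff d * z ^ (d 0 + d 1)) * Polynomial.X ^ (N + d 1 - d 0)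
    with hF
  have hFeval : ∀ (z w : ℂ), w ≠ 0 → (F z).eval w = w ^ N * eval ![z * w⁻¹, z * w] p := by
    intro z w hw
    rw [hF, MvPolynomial.eval_eq']
    simp only [Polynomial.eval_finset_sum, Polynomial.eval_mul, Polynomial.eval_C,
      Polynomial.eval_pow, Polynomial.eval_X, Finset.mul_sum]
    refine Finset.sum_congr rfl fun d hd => ?_
    have h0 : d 0 ≤ N := hd0 d hd
    rw [Fin.prod_univ_two]
    simp only [Matrix.cons_val_zero, Matrix.cons_val_one, Matrix.head_cons]
    apply mul_right_cancel₀ (pow_ne_zero (d 0) hw)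
    have hexp : N + d 1 - d 0 + d 0 = N + d 1 := by omega
    rw [mul_assoc, ← pow_add, hexp]
    field_simp
    have hww : w ^ d 0 * w⁻¹ ^ d 0 = 1 := by rw [← mul_pow, mul_inv_cancel₀ hw, one_pow]
    linear_combination (-(p.coeff d * z ^ d 0 * z ^ d 1 * w ^ d 1 * w ^ N)) * hww
  have hFcirc : ∀ (z w : ℂ), ‖w‖ = 1 → (F z).eval w = eval ![z, z] p * w ^ N := by
    intro z w hw
    have hw0 : w ≠ 0 := by intro h0; rw [h0] at hw; simp at hw
    have habs : ‖w‖ = 1 := hw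
    obtain ⟨θ, hθ⟩ : ∃ θ : ℝ, w = Complex.exp ((θ:ℂ) * Complex.I) := by
      refine ⟨w.arg, ?_⟩
      conv_lhs => rw [← Complex.norm_mul_exp_arg_mul_I w]
      rw [habs]; simp
    have h1 : w⁻¹ = Complex.exp (-(θ:ℂ) * Complex.I) := by
      rw [hθ, ← Complex.exp_neg, neg_mul]
    rw [hFeval z w hw0, h1, hθ, h z θ]; ring
  have hFid : ∀ z : ℂ, F z = Polynomial.C (eval ![z, z] p) * Polynomial.X ^ N := by
    intro z
    have : (F z - Polynomial.C (eval ![z, z] p) * Polynomial.X ^ N) = 0 := by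
      apply Polynomial.eq_zero_of_infinite_isRoot
      apply Set.Infinite.mono _ circle_infinite
      intro w hw
      simp only [Set.mem_setOf_eq, Polynomial.IsRoot, Polynomial.eval_sub, Polynomial.eval_mul,
        Polynomial.eval_C, Polynomial.eval_pow, Polynomial.eval_X]
      rw [hFcirc z w hw]; ring
    exact sub_eq_zero.mp this
  -- off-diagonal coefficients vanish
  have hoff : ∀ d ∈ p.support, d 0 ≠ d 1 → p.coeff d = 0 := by
    intro d hd hne
    set b := N + d 1 - d 0 with hb
    have hdN : d 0 ≤ N := hd0 d hd
    have hbN : b ≠ N := by omega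
    -- for every z, the coefficient of X^b in F z is 0
    have hzero : ∀ z : ℂ, ∑ e ∈ p.support.filter (fun e => b = N + e 1 - e 0),
        p.coeff e * z ^ (e 0 + e 1) = 0 := by
      intro z
      have h1 : (F z).coeff b = 0 := by
        rw [hFid z, Polynomial.coeff_C_mul, Polynomial.coeff_X_pow, if_neg hbN, mul_zero]
      rw [hF] at h1
      rw [Polynomial.finset_sum_coeff] at h1
      simp only [Polynomial.coeff_C_mul, Polynomial.coeff_X_pow, mul_ite, mul_one, mul_zero] at h1
      rwa [Finset.sum_ite, Finset.sum_const_zero, add_zero] at h1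
    -- second layer: polynomial in z
    have hG : (∑ e ∈ p.support.filter (fun e => b = N + e 1 - e 0),
        Polynomial.C (p.coeff e) * Polynomial.X ^ (e 0 + e 1)) = (0 : Polynomial ℂ) := by
      apply Polynomial.funext
      intro z
      simp only [Polynomial.eval_finset_sum, Polynomial.eval_mul, Polynomial.eval_C,
        Polynomial.eval_pow, Polynomial.eval_X, Polynomial.eval_zero]
      exact hzero z
    have hcoeff := congrArg (fun q => Polynomial.coeff q (d 0 + d 1)) hG
    simp only [Polynomial.finset_sum_coeff, Polynomial.coeff_C_mul, Polynomial.coeff_X_pow,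
      Polynomial.coeff_zero, mul_ite, mul_one, mul_zero] at hcoeff
    rw [Finset.sum_ite, Finset.sum_const_zero, add_zero] at hcoeff
    have hsingle : (p.support.filter (fun e => b = N + e 1 - e 0)).filter
        (fun e => d 0 + d 1 = e 0 + e 1) = {d} := by
      ext e
      simp only [Finset.mem_filter, Finset.mem_singleton]
      constructor
      · rintro ⟨⟨he, he1⟩, he2⟩
        have heN : e 0 ≤ N := hd0 e he
        have h00 : e 0 = d 0 ∧ e 1 = d 1 := by omega
        ext i
        fin_cases i
        · exact h00.1
        · exact h00.2
      · rintro rfl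
        exact ⟨⟨hd, rfl⟩, rfl⟩
    rw [hsingle, Finset.sum_singleton] at hcoeff
    exact hcoeff
  -- construct q
  refine ⟨∑ d ∈ p.support.filter (fun d => d 0 = d 1),
    Polynomial.C (p.coeff d) * Polynomial.X ^ (d 0), ?_⟩
  intro x y
  rw [MvPolynomial.eval_eq']
  simp only [Polynomial.eval_finset_sum, Polynomial.eval_mul, Polynomial.eval_C,
    Polynomial.eval_pow, Polynomial.eval_X]
  rw [← Finset.sum_filter_add_sum_filter_not p.support (fun d => d 0 = d 1)]
  have hz : ∑ d ∈ p.support.filter (fun d => ¬ d 0 = d 1),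
      p.coeff d * ∏ i, (![x, y] : Fin 2 → ℂ) i ^ d i = 0 := by
    apply Finset.sum_eq_zero
    intro d hd
    rw [Finset.mem_filter] at hd
    rw [hoff d hd.1 hd.2, zero_mul]
  rw [hz, add_zero]
  refine Finset.sum_congr rfl fun d hd => ?_
  rw [Finset.mem_filter] at hd
  rw [Fin.prod_univ_two]
  simp only [Matrix.cons_val_zero, Matrix.cons_val_one, Matrix.head_cons]
  rw [← hd.2, mul_pow]


/-- bivariate polynomial behind `Pfun` -/
noncomputable def Pmv {n : ℕ} (C : Matrix (Fin n) (Fin n) ℂ) : MvPolynomial (Fin 2) ℂ :=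
  Matrix.det ((1 : Matrix (Fin n) (Fin n) (MvPolynomial (Fin 2) ℂ))
    - (MvPolynomial.X 0 : MvPolynomial (Fin 2) ℂ) • (C.map MvPolynomial.C)
    - (MvPolynomial.X 1 : MvPolynomial (Fin 2) ℂ) • (Cᴴ.map MvPolynomial.C))

noncomputable def Qmv {n : ℕ} (C : Matrix (Fin n) (Fin n) ℂ) : MvPolynomial (Fin 2) ℂ :=
  Matrix.det ((1 : Matrix (Fin n) (Fin n) (MvPolynomial (Fin 2) ℂ))
    - (MvPolynomial.X 0 : MvPolynomial (Fin 2) ℂ) • (C.map MvPolynomial.C)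
    - (MvPolynomial.X 1 : MvPolynomial (Fin 2) ℂ) • (Cᴴ.map MvPolynomial.C)
    - (MvPolynomial.X 0 * MvPolynomial.X 1 : MvPolynomial (Fin 2) ℂ) •
        ((1 : Matrix (Fin n) (Fin n) (MvPolynomial (Fin 2) ℂ)) - (Cᴴ * C).map MvPolynomial.C))

lemma mapMatrix_smul' {R S : Type*} {ι : Type*} [Fintype ι] [DecidableEq ι]
    [CommRing R] [CommRing S] (f : R →+* S) (a : R) (M : Matrix ι ι R) :
    f.mapMatrix (a • M) = f a • f.mapMatrix M := by
  ext i j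
  simp [smul_eq_mul]

lemma mapMatrix_map_C {n : ℕ} (x y : ℂ) (M : Matrix (Fin n) (Fin n) ℂ) :
    (MvPolynomial.eval ![x, y]).mapMatrix (M.map MvPolynomial.C) = M := by
  ext i j
  simp

lemma Pmv_eval {n : ℕ} (C : Matrix (Fin n) (Fin n) ℂ) (x y : ℂ) :
    MvPolynomial.eval ![x, y] (Pmv C) = Pfun C x y := by
  rw [Pmv, Pfun, RingHom.map_det]
  congr 1
  rw [map_sub, map_sub, _root_.map_one, mapMatrix_smul', mapMatrix_smul', mapMatrix_map_C,
    mapMatrix_map_C]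
  simp

lemma Qmv_eval {n : ℕ} (C : Matrix (Fin n) (Fin n) ℂ) (x y : ℂ) :
    MvPolynomial.eval ![x, y] (Qmv C) = Qfun C x y := by
  rw [Qmv, Qfun, RingHom.map_det]
  congr 1
  rw [map_sub, map_sub, map_sub, _root_.map_one, mapMatrix_smul', mapMatrix_smul',
    mapMatrix_smul', map_sub, _root_.map_one, mapMatrix_map_C, mapMatrix_map_C, mapMatrix_map_C,
    _root_.map_mul]
  simp


lemma ne_zero_infinite : Set.Infinite {t : ℂ | t ≠ 0} := by
  have h := (Set.finite_singleton (0:ℂ)).infinite_compl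
  convert h using 1
  ext t; simp

lemma equiv_aux {ι : Type*} [Fintype ι] [DecidableEq ι] (N : ℕ) (p : MvPolynomial (Fin 2) ℂ)
    (Hfam : ℝ → Matrix ι ι ℂ)
    (hcore : ∀ p' : MvPolynomial (Fin 2) ℂ,
      (∀ (z : ℂ) (θ : ℝ),
        MvPolynomial.eval ![z * Complex.exp (-(θ:ℂ) * Complex.I),
          z * Complex.exp ((θ:ℂ) * Complex.I)] p' = MvPolynomial.eval ![z, z] p') →
      ∃ q : Polynomial ℂ, ∀ x y : ℂ, MvPolynomial.eval ![x, y] p' = Polynomial.eval (x * y) q)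
    (hkey : ∀ t : ℂ, t ≠ 0 → ∀ θ : ℝ, Polynomial.eval t (Hfam θ).charpoly
      = t ^ N * MvPolynomial.eval
          ![Complex.exp (-(θ:ℂ) * Complex.I) / (2 * t),
            Complex.exp ((θ:ℂ) * Complex.I) / (2 * t)] p) :
    (∀ θ : ℝ, (Hfam θ).charpoly = (Hfam 0).charpoly) ↔
      ∃ q : Polynomial ℂ, ∀ x y : ℂ, MvPolynomial.eval ![x, y] p = Polynomial.eval (x * y) q := by
  constructor
  · intro hθ
    apply hcore
    intro z θ
    rcases eq_or_ne z 0 with rfl | hz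
    · norm_num
    · have ht : (2 * z)⁻¹ ≠ 0 := inv_ne_zero (mul_ne_zero two_ne_zero hz)
      have h1 := hkey _ ht θ
      have h2 := hkey _ ht 0
      rw [hθ θ, h2] at h1
      have h3 := mul_left_cancel₀ (pow_ne_zero N ht) h1.symm
      have harg1 : ![z * Complex.exp (-(θ:ℂ) * Complex.I), z * Complex.exp ((θ:ℂ) * Complex.I)]
          = ![Complex.exp (-(θ:ℂ) * Complex.I) / (2 * (2*z)⁻¹),
             Complex.exp ((θ:ℂ) * Complex.I) / (2 * (2*z)⁻¹)] := by
        funext i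
        fin_cases i <;> (simp; field_simp)
      have harg2 : ![z, z] = ![Complex.exp (-((0:ℝ):ℂ) * Complex.I) / (2 * (2*z)⁻¹),
             Complex.exp (((0:ℝ):ℂ) * Complex.I) / (2 * (2*z)⁻¹)] := by
        funext i
        fin_cases i <;> (simp; field_simp)
      rw [harg1, harg2]
      exact h3
  · rintro ⟨q, hq⟩ θ
    have hsub : (Hfam θ).charpoly - (Hfam 0).charpoly = 0 := by
      apply Polynomial.eq_zero_of_infinite_isRoot
      apply Set.Infinite.mono _ ne_zero_infinite
      intro t ht
      simp only [Set.mem_setOf_eq] at ht ⊢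
      have hprod : ∀ ψ : ℝ, Complex.exp (-(ψ:ℂ) * Complex.I) / (2 * t)
          * (Complex.exp ((ψ:ℂ) * Complex.I) / (2 * t)) = 1 / (2 * t * (2 * t)) := by
        intro ψ
        rw [div_mul_div_comm, ← Complex.exp_add]
        norm_num
      show Polynomial.IsRoot _ t
      rw [Polynomial.IsRoot, Polynomial.eval_sub, hkey t ht θ, hkey t ht 0, hq, hq,
        hprod θ, hprod 0, sub_self]
    exact sub_eq_zero.mp hsub


lemma hkeyP {n : ℕ} (C : Matrix (Fin n) (Fin n) ℂ) (t : ℂ) (ht : t ≠ 0) (θ : ℝ) :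
    Polynomial.eval t (Hmat C θ).charpoly
      = t ^ n * Pfun C (Complex.exp (-(θ:ℂ) * Complex.I) / (2 * t))
          (Complex.exp ((θ:ℂ) * Complex.I) / (2 * t)) := by
  rw [charpoly_eval']
  have hmat : t • (1 : Matrix (Fin n) (Fin n) ℂ) - Hmat C θ
      = t • ((1 : Matrix (Fin n) (Fin n) ℂ)
          - (Complex.exp (-(θ:ℂ) * Complex.I) / (2 * t)) • C
          - (Complex.exp ((θ:ℂ) * Complex.I) / (2 * t)) • Cᴴ) := by
    ext i j
    simp only [Hmat, Matrix.sub_apply, Matrix.smul_apply, Matrix.add_apply, Matrix.one_apply,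
      smul_eq_mul]
    field_simp
    ring
  rw [hmat, Matrix.det_smul, Fintype.card_fin, Pfun]

lemma hkeyQ {m n : ℕ} (C : Matrix (Fin n) (Fin n) ℂ) (B : Matrix (Fin m) (Fin n) ℂ)
    (hBC : Bᴴ * B + Cᴴ * C = 1) (t : ℂ) (ht : t ≠ 0) (θ : ℝ) :
    Polynomial.eval t (Hmat (Matrix.fromBlocks 0 B 0 C) θ).charpoly
      = t ^ (m + n) * Qfun C (Complex.exp (-(θ:ℂ) * Complex.I) / (2 * t))
          (Complex.exp ((θ:ℂ) * Complex.I) / (2 * t)) := by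
  set a := Complex.exp (-(θ:ℂ) * Complex.I) with ha
  set b := Complex.exp ((θ:ℂ) * Complex.I) with hb
  rw [charpoly_eval']
  have step1 : t • (1 : Matrix (Fin m ⊕ Fin n) (Fin m ⊕ Fin n) ℂ)
        - Hmat (Matrix.fromBlocks 0 B 0 C) θ
      = Matrix.fromBlocks (t • (1 : Matrix (Fin m) (Fin m) ℂ)) ((-(a/2)) • B)
          ((-(b/2)) • Bᴴ) (t • (1 : Matrix (Fin n) (Fin n) ℂ) - Hmat C θ) := by
    have hAH : (Matrix.fromBlocks (0 : Matrix (Fin m) (Fin m) ℂ) B 0 C)ᴴ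
        = Matrix.fromBlocks 0 0 Bᴴ Cᴴ := by
      rw [Matrix.fromBlocks_conjTranspose]
      simp
    rw [Hmat, hAH, Hmat]
    ext (i|i) (j|j) <;>
      simp [Matrix.sub_apply, Matrix.smul_apply, Matrix.add_apply, Matrix.one_apply,
        ← neg_mul, ← ha, ← hb] <;>
      ring
  rw [step1]
  haveI : Invertible (t • (1 : Matrix (Fin m) (Fin m) ℂ)) :=
    ⟨t⁻¹ • (1 : Matrix (Fin m) (Fin m) ℂ),
     by rw [Matrix.smul_mul, Matrix.mul_smul, smul_smul, inv_mul_cancel₀ ht, Matrix.mul_one,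
        one_smul],
     by rw [Matrix.smul_mul, Matrix.mul_smul, smul_smul, mul_inv_cancel₀ ht, Matrix.mul_one,
        one_smul]⟩
  rw [Matrix.det_fromBlocks₁₁]
  have hinv : ⅟(t • (1 : Matrix (Fin m) (Fin m) ℂ)) = t⁻¹ • (1 : Matrix (Fin m) (Fin m) ℂ) := by
    apply invOf_eq_right_inv
    rw [Matrix.smul_mul, Matrix.mul_smul, smul_smul, mul_inv_cancel₀ ht, Matrix.mul_one, one_smul]
  rw [hinv]
  have hBB : Bᴴ * B = 1 - Cᴴ * C := eq_sub_of_add_eq hBC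
  have hS : (t • (1 : Matrix (Fin n) (Fin n) ℂ) - Hmat C θ)
        - ((-(b/2)) • Bᴴ) * (t⁻¹ • (1 : Matrix (Fin m) (Fin m) ℂ)) * ((-(a/2)) • B)
      = t • ((1 : Matrix (Fin n) (Fin n) ℂ) - (a / (2*t)) • C - (b / (2*t)) • Cᴴ
          - ((a / (2*t)) * (b / (2*t))) • ((1 : Matrix (Fin n) (Fin n) ℂ) - Cᴴ * C)) := by
    simp only [Matrix.smul_mul, Matrix.mul_smul, smul_smul, Matrix.mul_one]
    rw [hBB]
    ext i j
    simp only [Hmat, Matrix.sub_apply, Matrix.smul_apply, Matrix.add_apply, Matrix.one_apply,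
      smul_eq_mul]
    rw [← ha, ← hb]
    field_simp
    ring
  rw [hS, Matrix.det_smul, Matrix.det_smul, Fintype.card_fin, Fintype.card_fin, Matrix.det_one,
    mul_one, Qfun]
  ring

theorem stmt9 (m n : ℕ) (C : Matrix (Fin n) (Fin n) ℂ) (B : Matrix (Fin m) (Fin n) ℂ)
    (hBC : Bᴴ * B + Cᴴ * C = 1)
    (A : Matrix (Fin m ⊕ Fin n) (Fin m ⊕ Fin n) ℂ)
    (hA : A = Matrix.fromBlocks 0 B 0 C) :
    ((∀ θ : ℝ, (Hmat A θ).charpoly = (Hmat A 0).charpoly) ↔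
      ∃ q : Polynomial ℂ, ∀ x y : ℂ, Qfun C x y = q.eval (x * y)) ∧
    ((∀ θ : ℝ, (Hmat C θ).charpoly = (Hmat C 0).charpoly) ↔
      ∃ q : Polynomial ℂ, ∀ x y : ℂ, Pfun C x y = q.eval (x * y)) := by
  subst hA
  constructor
  · have h1 := equiv_aux (m + n) (Qmv C) (fun θ => Hmat (Matrix.fromBlocks 0 B 0 C) θ)
      (fun p' hp' => core p' hp')
      (fun t ht θ => by rw [hkeyQ C B hBC t ht θ, Qmv_eval])
    simp only [Qmv_eval] at h1
    exact h1
  · have h2 := equiv_aux n (Pmv C) (fun θ => Hmat C θ)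
      (fun p' hp' => core p' hp')
      (fun t ht θ => by rw [hkeyP C t ht θ, Pmv_eval])
    simp only [Pmv_eval] at h2
    exact h2
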